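/- Let X be a real normed space, Y a real Banach space, and ψ : X × X → [0, ∞) a function such that the series ∑_{i=0}^∞ 16^i ψ(0, 2^{-i-1} x) converges for all x in X and lim_{n→∞} 16^n ψ(2^{-n} x, 2^{-n} y) = 0 for all x, y in X. If f : X → Y is an even function with f(0) = 0 satisfying ‖D_f(x,y)‖ ≤ ψ(x,y) for all x, y in X, then the limit Q(x) = lim_{n→∞} 16^n f(2^{-n} x) exists for all x in X, and Q : X → Y is a unique quartic function satisfying ‖f(x) - Q(x)‖ ≤ (1/3) ∑_{i=0}^∞ 16^i ψ(0, 2^{-i-1} x) for all x in X. -/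

import Mathlib

open Filter Topology

/-- The quartic functional equation:
`Q(2x+y) + Q(2x-y) = 4(Q(x+y) + Q(x-y)) + 24 Q(x) - 6 Q(y)`. -/
def IsQuartic {X Y : Type*} [AddCommGroup X] [Module ℝ X] [AddCommGroup Y] [Module ℝ Y]
    (f : X → Y) : Prop :=
  ∀ x y : X,
    f ((2 : ℝ) • x + y) + f ((2 : ℝ) • x - y) =
      (4 : ℝ) • (f (x + y) + f (x - y)) + (24 : ℝ) • f x - (6 : ℝ) • f y

/-- The difference operator
`D_f(x,y) = 7[f(2x+y) + f(2x-y)] - 28[f(x+y) + f(x-y)] + 3[f(2y) - 2f(y)] - 14[f(2x) - 4f(x)]`. -/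
def Dmap {X Y : Type*} [AddCommGroup X] [Module ℝ X] [AddCommGroup Y] [Module ℝ Y]
    (f : X → Y) (x y : X) : Y :=
  (7 : ℝ) • (f ((2 : ℝ) • x + y) + f ((2 : ℝ) • x - y))
    - (28 : ℝ) • (f (x + y) + f (x - y))
    + (3 : ℝ) • (f ((2 : ℝ) • y) - (2 : ℝ) • f y)
    - (14 : ℝ) • (f ((2 : ℝ) • x) - (4 : ℝ) • f x)

/-!
Setting `x = 0` in `D_f` and using that `f` is even gives `D_f(0, y) = 3 (f(2y) - 16 f(y))`, so `f`
is approximately `16`-homogeneous at the scale `2`. Hence the rescalings `16ⁿ f(2⁻ⁿ x)` form a Cauchy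
sequence whose consecutive differences are the terms of the given series, and the limit `Q` lies within
the sum of that series of `f`. Rescaling commutes with `D`, so `D_Q = 0` by the hypothesis on `ψ`; together
with `Q(2x) = 16 Q(x)` this is the quartic equation. A quartic `Q'` is invariant under the rescaling, so
if it also lies within the series of `f`, then `16ⁿ (f - Q')(2⁻ⁿ x)` is bounded by a tail of the series,
and the rescalings of `f` tend to `Q'` as well.
-/

section Algebra

variable {X Y : Type*} [AddCommGroup X] [Module ℝ X] [AddCommGroup Y] [Module ℝ Y]

lemma neg_natCast_succ (n : ℕ) : -((n + 1 : ℕ) : ℤ) = -(n : ℤ) - 1 := by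
  push_cast
  ring

lemma two_smul_zpow_neg_sub_one_smul (n : ℕ) (x : X) :
    (2 : ℝ) • ((2 : ℝ) ^ (-(n : ℤ) - 1) • x) = (2 : ℝ) ^ (-(n : ℤ)) • x := by
  rw [smul_smul, ← zpow_one_add₀ two_ne_zero]
  ring_nf

lemma zpow_neg_sub_one_smul_zpow_neg_smul (i n : ℕ) (x : X) :
    (2 : ℝ) ^ (-(i : ℤ) - 1) • ((2 : ℝ) ^ (-(n : ℤ)) • x) =
      (2 : ℝ) ^ (-((i + n : ℕ) : ℤ) - 1) • x := by
  rw [smul_smul, ← zpow_add₀ two_ne_zero]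
  push_cast
  ring_nf

noncomputable def hyersSeq (f : X → Y) (n : ℕ) (x : X) : Y :=
  (16 : ℝ) ^ n • f ((2 : ℝ) ^ (-(n : ℤ)) • x)

@[simp]
lemma hyersSeq_zero (f : X → Y) : hyersSeq f 0 = f := by
  funext x
  simp [hyersSeq]

lemma hyersSeq_sub_hyersSeq_succ (f : X → Y) (n : ℕ) (x : X) :
    hyersSeq f n x - hyersSeq f (n + 1) x =
      (16 : ℝ) ^ n • (f ((2 : ℝ) • ((2 : ℝ) ^ (-(n : ℤ) - 1) • x))
        - (16 : ℝ) • f ((2 : ℝ) ^ (-(n : ℤ) - 1) • x)) := by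
  rw [two_smul_zpow_neg_sub_one_smul, hyersSeq, hyersSeq, neg_natCast_succ, pow_succ, smul_sub,
    smul_smul]

lemma hyersSeq_succ_two_smul (f : X → Y) (n : ℕ) (x : X) :
    hyersSeq f (n + 1) ((2 : ℝ) • x) = (16 : ℝ) • hyersSeq f n x := by
  have hx : (2 : ℝ) ^ (-((n + 1 : ℕ) : ℤ)) • (2 : ℝ) • x = (2 : ℝ) ^ (-(n : ℤ)) • x := by
    rw [smul_comm, neg_natCast_succ, two_smul_zpow_neg_sub_one_smul]
  rw [hyersSeq, hyersSeq, hx, pow_succ, smul_smul, mul_comm]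

lemma Dmap_zero_left {f : X → Y} (heven : ∀ x : X, f (-x) = f x) (hf0 : f 0 = 0) (y : X) :
    Dmap f 0 y = (3 : ℝ) • (f ((2 : ℝ) • y) - (16 : ℝ) • f y) := by
  simp only [Dmap, smul_zero, zero_add, zero_sub, heven y, hf0]
  module

lemma pow_smul_Dmap_zpow_smul (f : X → Y) (n : ℕ) (x y : X) :
    (16 : ℝ) ^ n • Dmap f ((2 : ℝ) ^ (-(n : ℤ)) • x) ((2 : ℝ) ^ (-(n : ℤ)) • y) =
      Dmap (hyersSeq f n) x y := by
  simp only [Dmap, hyersSeq, smul_add, smul_sub, smul_comm ((2 : ℝ) ^ (-(n : ℤ))) (2 : ℝ)]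
  module

lemma isQuartic_of_Dmap_eq_zero {Q : X → Y} (h2 : ∀ x, Q ((2 : ℝ) • x) = (16 : ℝ) • Q x)
    (hD : ∀ x y, Dmap Q x y = 0) : IsQuartic Q := by
  intro x y
  have h := hD x y
  rw [Dmap, h2 x, h2 y] at h
  linear_combination (norm := module) (7⁻¹ : ℝ) • h

namespace IsQuartic

variable {Q : X → Y}

lemma map_zero (hQ : IsQuartic Q) : Q 0 = 0 := by
  have h := hQ 0 0
  simp only [smul_zero, add_zero, sub_zero] at h
  linear_combination (norm := module) (-(24⁻¹ : ℝ)) • h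

lemma map_two_smul (hQ : IsQuartic Q) (x : X) : Q ((2 : ℝ) • x) = (16 : ℝ) • Q x := by
  have h := hQ x 0
  simp only [add_zero, sub_zero, hQ.map_zero] at h
  linear_combination (norm := module) (2⁻¹ : ℝ) • h

lemma hyersSeq_eq (hQ : IsQuartic Q) (n : ℕ) : hyersSeq Q n = Q := by
  induction n with
  | zero => exact hyersSeq_zero Q
  | succ n ih =>
    funext x
    rw [← congrFun ih x, hyersSeq, hyersSeq, neg_natCast_succ, ← two_smul_zpow_neg_sub_one_smul,
      hQ.map_two_smul, pow_succ, smul_smul]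

end IsQuartic

end Algebra

section Normed

variable {X Y : Type*} [NormedAddCommGroup X] [NormedSpace ℝ X]
  [NormedAddCommGroup Y] [NormedSpace ℝ Y]

lemma norm_map_two_smul_sub_le {f : X → Y} {ψ : X → X → ℝ} (heven : ∀ x : X, f (-x) = f x)
    (hf0 : f 0 = 0) (hD : ∀ x y : X, ‖Dmap f x y‖ ≤ ψ x y) (y : X) :
    ‖f ((2 : ℝ) • y) - (16 : ℝ) • f y‖ ≤ (1 / 3) * ψ 0 y := by
  have h := hD 0 y
  rw [Dmap_zero_left heven hf0, norm_smul, Real.norm_ofNat] at h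
  linarith

lemma dist_hyersSeq_succ_le {f : X → Y} {φ : X → ℝ}
    (hφ : ∀ y, ‖f ((2 : ℝ) • y) - (16 : ℝ) • f y‖ ≤ φ y) (n : ℕ) (x : X) :
    dist (hyersSeq f n x) (hyersSeq f (n + 1) x) ≤
      (16 : ℝ) ^ n * φ ((2 : ℝ) ^ (-(n : ℤ) - 1) • x) := by
  rw [dist_eq_norm, hyersSeq_sub_hyersSeq_succ, norm_smul, norm_pow, Real.norm_ofNat]
  gcongr
  exact hφ _

lemma norm_sub_le_tsum_of_tendsto_hyersSeq {f : X → Y} {φ : X → ℝ}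
    (hφ : ∀ y, ‖f ((2 : ℝ) • y) - (16 : ℝ) • f y‖ ≤ φ y) {x : X}
    (hs : Summable fun n : ℕ => (16 : ℝ) ^ n * φ ((2 : ℝ) ^ (-(n : ℤ) - 1) • x)) {q : Y}
    (hq : Tendsto (fun n => hyersSeq f n x) atTop (𝓝 q)) :
    ‖f x - q‖ ≤ ∑' n : ℕ, (16 : ℝ) ^ n * φ ((2 : ℝ) ^ (-(n : ℤ) - 1) • x) := by
  simpa [dist_eq_norm] using
    dist_le_tsum_of_dist_le_of_tendsto₀ _ (dist_hyersSeq_succ_le hφ · x) hs hq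

lemma map_two_smul_of_tendsto_hyersSeq {f Q : X → Y}
    (hQ : ∀ x, Tendsto (fun n => hyersSeq f n x) atTop (𝓝 (Q x))) (x : X) :
    Q ((2 : ℝ) • x) = (16 : ℝ) • Q x := by
  have h := (hQ ((2 : ℝ) • x)).comp (tendsto_add_atTop_nat 1)
  simp only [Function.comp_def, hyersSeq_succ_two_smul] at h
  exact tendsto_nhds_unique h ((hQ x).const_smul _)

lemma tendsto_Dmap {ι : Type*} {l : Filter ι} {F : ι → X → Y} {Q : X → Y}
    (hF : ∀ x, Tendsto (fun i => F i x) l (𝓝 (Q x))) (x y : X) :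
    Tendsto (fun i => Dmap (F i) x y) l (𝓝 (Dmap Q x y)) :=
  (((((hF _).add (hF _)).const_smul _).sub (((hF _).add (hF _)).const_smul _)).add
    (((hF _).sub ((hF _).const_smul _)).const_smul _)).sub
    (((hF _).sub ((hF _).const_smul _)).const_smul _)

lemma Dmap_eq_zero_of_tendsto_hyersSeq {f Q : X → Y} {ψ : X → X → ℝ}
    (hD : ∀ x y : X, ‖Dmap f x y‖ ≤ ψ x y)
    (hlim : ∀ x y : X, Tendsto (fun n : ℕ =>
      (16 : ℝ) ^ n * ψ ((2 : ℝ) ^ (-(n : ℤ)) • x) ((2 : ℝ) ^ (-(n : ℤ)) • y)) atTop (𝓝 0))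
    (hQ : ∀ x, Tendsto (fun n => hyersSeq f n x) atTop (𝓝 (Q x))) (x y : X) :
    Dmap Q x y = 0 := by
  refine tendsto_nhds_unique (tendsto_Dmap hQ x y) (squeeze_zero_norm (fun n => ?_) (hlim x y))
  rw [← pow_smul_Dmap_zpow_smul, norm_smul, norm_pow, Real.norm_ofNat]
  gcongr
  exact hD _ _

lemma pow_mul_tsum_zpow_smul (φ : X → ℝ) (n : ℕ) (x : X) :
    (16 : ℝ) ^ n * ∑' i : ℕ, (16 : ℝ) ^ i * φ ((2 : ℝ) ^ (-(i : ℤ) - 1) • (2 : ℝ) ^ (-(n : ℤ)) • x) =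
      ∑' i : ℕ, (16 : ℝ) ^ (i + n) * φ ((2 : ℝ) ^ (-((i + n : ℕ) : ℤ) - 1) • x) := by
  rw [← tsum_mul_left]
  congr 1
  funext i
  rw [zpow_neg_sub_one_smul_zpow_neg_smul, pow_add]
  ring

lemma IsQuartic.tendsto_hyersSeq {f Q : X → Y} (hQ : IsQuartic Q) {φ : X → ℝ}
    (hb : ∀ x, ‖f x - Q x‖ ≤ ∑' i : ℕ, (16 : ℝ) ^ i * φ ((2 : ℝ) ^ (-(i : ℤ) - 1) • x)) (x : X) :
    Tendsto (fun n => hyersSeq f n x) atTop (𝓝 (Q x)) := by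
  have htail := tendsto_sum_nat_add fun j : ℕ => (16 : ℝ) ^ j * φ ((2 : ℝ) ^ (-(j : ℤ) - 1) • x)
  have hsub : Tendsto (fun n => hyersSeq f n x - hyersSeq Q n x) atTop (𝓝 0) := by
    refine squeeze_zero_norm (fun n => ?_) htail
    rw [hyersSeq, hyersSeq, ← smul_sub, norm_smul, norm_pow, Real.norm_ofNat,
      ← pow_mul_tsum_zpow_smul]
    gcongr
    exact hb _
  simpa [hQ.hyersSeq_eq] using hsub.add_const (Q x)

end Normed

theorem even_stability'_general {X Y : Type*} [NormedAddCommGroup X] [NormedSpace ℝ X]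
    [NormedAddCommGroup Y] [NormedSpace ℝ Y] [CompleteSpace Y]
    (ψ : X → X → ℝ)
    (hsum : ∀ x : X, Summable fun i : ℕ => (16 : ℝ) ^ i * ψ 0 ((2 : ℝ) ^ (-(i : ℤ) - 1) • x))
    (hlim : ∀ x y : X,
      Tendsto (fun n : ℕ =>
        (16 : ℝ) ^ n * ψ ((2 : ℝ) ^ (-(n : ℤ)) • x) ((2 : ℝ) ^ (-(n : ℤ)) • y)) atTop (𝓝 0))
    (f : X → Y) (heven : ∀ x : X, f (-x) = f x) (hf0 : f 0 = 0)
    (hD : ∀ x y : X, ‖Dmap f x y‖ ≤ ψ x y) :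
    ∃ Q : X → Y,
      (∀ x : X,
        Tendsto (fun n : ℕ => (16 : ℝ) ^ n • f ((2 : ℝ) ^ (-(n : ℤ)) • x)) atTop (𝓝 (Q x))) ∧
      IsQuartic Q ∧
      (∀ x : X, ‖f x - Q x‖ ≤
        (1 / 3) * ∑' i : ℕ, (16 : ℝ) ^ i * ψ 0 ((2 : ℝ) ^ (-(i : ℤ) - 1) • x)) ∧
      ∀ Q' : X → Y, IsQuartic Q' →
        (∀ x : X, ‖f x - Q' x‖ ≤
          (1 / 3) * ∑' i : ℕ, (16 : ℝ) ^ i * ψ 0 ((2 : ℝ) ^ (-(i : ℤ) - 1) • x)) →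
        Q' = Q := by
  set φ : X → ℝ := fun y => (1 / 3) * ψ 0 y
  have hφ := norm_map_two_smul_sub_le heven hf0 hD
  have hsumφ (x : X) : Summable fun n : ℕ => (16 : ℝ) ^ n * φ ((2 : ℝ) ^ (-(n : ℤ) - 1) • x) := by
    simpa only [φ, mul_left_comm] using (hsum x).mul_left (1 / 3)
  have htsumφ (x : X) : ∑' n : ℕ, (16 : ℝ) ^ n * φ ((2 : ℝ) ^ (-(n : ℤ) - 1) • x) =
      (1 / 3) * ∑' i : ℕ, (16 : ℝ) ^ i * ψ 0 ((2 : ℝ) ^ (-(i : ℤ) - 1) • x) := by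
    simp only [φ, mul_left_comm _ (1 / 3 : ℝ), tsum_mul_left]
  have hcauchy (x : X) : CauchySeq fun n => hyersSeq f n x :=
    cauchySeq_of_dist_le_of_summable _ (dist_hyersSeq_succ_le hφ · x) (hsumφ x)
  choose Q hQ using fun x => cauchySeq_tendsto_of_complete (hcauchy x)
  refine ⟨Q, hQ, ?_, fun x => ?_, fun Q' hQ' hb' => funext fun x => ?_⟩
  · exact isQuartic_of_Dmap_eq_zero (map_two_smul_of_tendsto_hyersSeq hQ)
      (Dmap_eq_zero_of_tendsto_hyersSeq hD hlim hQ)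
  · rw [← htsumφ]
    exact norm_sub_le_tsum_of_tendsto_hyersSeq hφ (hsumφ x) (hQ x)
  · refine tendsto_nhds_unique (hQ'.tendsto_hyersSeq (φ := φ) (fun y => ?_) x) (hQ x)
    rw [htsumφ]
    exact hb' y

theorem even_stability' {X Y : Type*} [NormedAddCommGroup X] [NormedSpace ℝ X]
    [NormedAddCommGroup Y] [NormedSpace ℝ Y] [CompleteSpace Y]
    (ψ : X → X → ℝ) (hψ : ∀ x y : X, 0 ≤ ψ x y)
    (hsum : ∀ x : X, Summable fun i : ℕ => (16 : ℝ) ^ i * ψ 0 ((2 : ℝ) ^ (-(i : ℤ) - 1) • x))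
    (hlim : ∀ x y : X,
      Tendsto (fun n : ℕ =>
        (16 : ℝ) ^ n * ψ ((2 : ℝ) ^ (-(n : ℤ)) • x) ((2 : ℝ) ^ (-(n : ℤ)) • y)) atTop (𝓝 0))
    (f : X → Y) (heven : ∀ x : X, f (-x) = f x) (hf0 : f 0 = 0)
    (hD : ∀ x y : X, ‖Dmap f x y‖ ≤ ψ x y) :
    ∃ Q : X → Y,
      (∀ x : X,
        Tendsto (fun n : ℕ => (16 : ℝ) ^ n • f ((2 : ℝ) ^ (-(n : ℤ)) • x)) atTop (𝓝 (Q x))) ∧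
      IsQuartic Q ∧
      (∀ x : X, ‖f x - Q x‖ ≤
        (1 / 3) * ∑' i : ℕ, (16 : ℝ) ^ i * ψ 0 ((2 : ℝ) ^ (-(i : ℤ) - 1) • x)) ∧
      ∀ Q' : X → Y, IsQuartic Q' →
        (∀ x : X, ‖f x - Q' x‖ ≤
          (1 / 3) * ∑' i : ℕ, (16 : ℝ) ^ i * ψ 0 ((2 : ℝ) ^ (-(i : ℤ) - 1) • x)) →
        Q' = Q :=
  even_stability'_general ψ hsum hlim f heven hf0 hD
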